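/- Under the split Bregman iteration setting, suppose β* ∈ ℝ^p is a global minimizer of Φ(β) = V(β) + λ₁‖β‖₁ + λ₂‖Lβ‖₁, and let h* ∈ ∂V(β*), p* ∈ ∂‖·‖₁(β*), q* ∈ ∂‖·‖₁(Lβ*) satisfy h* + λ₁p* + λ₂Lᵀq* = 0. Then the Bregman distance of V along the iterates vanishes: lim_{k→∞} [ V(β^k) − V(β*) − ⟨h*, β^k − β*⟩ ] = 0. -/

import Mathlib

/-!
Measure the iterates against the optimality system through the energy
`E_k = δ₂‖u^k − λ₁p*‖² + δ₁δ₂μ₁‖a^k − β*‖² + δ₁‖v^k − λ₂q*‖² + δ₁δ₂μ₂‖b^k − Lβ*‖²`.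
Subtracting the optimality condition from the three subproblem equations, testing them against
the errors `β^{k+1} − β*`, `a^{k+1} − β*`, `b^{k+1} − Lβ*` and expanding the multiplier updates
expresses `E_k − E_{k+1}` as `2δ₁δ₂` times a sum of subgradient pairings plus squares weighted by
`μᵢ` and `μᵢ − δᵢ ≥ 0`. Monotonicity of the subdifferentials makes the pairings nonnegative, and
the one for `V` dominates the Bregman distance `D_{k+1}`; so `2δ₁δ₂ D_{k+1} + E_{k+1} ≤ E_k`,
the `D_k` are summable and tend to zero.
-/

open Filter Matrix Finset

/-- The ℓ1 norm on `Fin d → ℝ`. -/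
noncomputable def l1 {d : ℕ} (x : Fin d → ℝ) : ℝ := ∑ i, |x i|

/-- The Euclidean (ℓ2) norm on `Fin d → ℝ`. -/
noncomputable def l2 {d : ℕ} (x : Fin d → ℝ) : ℝ := Real.sqrt (∑ i, (x i) ^ 2)

/-- The Euclidean inner product on `Fin d → ℝ`. -/
def dotp {d : ℕ} (x y : Fin d → ℝ) : ℝ := ∑ i, x i * y i

/-- `g` is a subgradient of `f` at `x`. -/
def IsSubgrad {d : ℕ} (f : (Fin d → ℝ) → ℝ) (x g : Fin d → ℝ) : Prop :=
  ∀ z, f z ≥ f x + dotp g (z - x)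

section Energy

variable {ι κ : Type*} [Fintype ι] [Fintype κ]

def splitBregmanEnergy (del1 del2 mu1 mu2 : ℝ) (u a : ι → ℝ) (v b : κ → ℝ) : ℝ :=
  del2 * (u ⬝ᵥ u) + del1 * del2 * mu1 * (a ⬝ᵥ a) + del1 * (v ⬝ᵥ v)
    + del1 * del2 * mu2 * (b ⬝ᵥ b)

lemma dotProduct_self_nonneg {R : Type*} [Ring R] [LinearOrder R] [IsStrictOrderedRing R]
    (x : ι → R) : 0 ≤ x ⬝ᵥ x :=
  sum_nonneg fun i _ ↦ mul_self_nonneg (x i)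

lemma splitBregmanEnergy_nonneg {del1 del2 mu1 mu2 : ℝ} (hdel1 : 0 ≤ del1) (hdel2 : 0 ≤ del2)
    (hmu1 : 0 ≤ mu1) (hmu2 : 0 ≤ mu2) (u a : ι → ℝ) (v b : κ → ℝ) :
    0 ≤ splitBregmanEnergy del1 del2 mu1 mu2 u a v b := by
  unfold splitBregmanEnergy
  have := dotProduct_self_nonneg u
  have := dotProduct_self_nonneg a
  have := dotProduct_self_nonneg v
  have := dotProduct_self_nonneg b
  positivity

lemma splitBregmanEnergy_sub_eq (L : Matrix κ ι ℝ) {lam1 lam2 mu1 mu2 del1 del2 : ℝ}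
    {x a₀ a₁ h p u₀ u₁ : ι → ℝ} {b₀ b₁ q v₀ v₁ : κ → ℝ}
    (hβ : h + u₀ + Lᵀ *ᵥ v₀ + mu1 • (x - a₀) + mu2 • Lᵀ *ᵥ (L *ᵥ x - b₀) = 0)
    (ha : lam1 • p - u₀ + mu1 • (a₁ - x) = 0)
    (hb : lam2 • q - v₀ + mu2 • (b₁ - L *ᵥ x) = 0)
    (hu : u₁ = u₀ + del1 • (x - a₁))
    (hv : v₁ = v₀ + del2 • (L *ᵥ x - b₁)) :
    splitBregmanEnergy del1 del2 mu1 mu2 u₀ a₀ v₀ b₀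
        - splitBregmanEnergy del1 del2 mu1 mu2 u₁ a₁ v₁ b₁
      = 2 * del1 * del2 * (h ⬝ᵥ x + lam1 * (p ⬝ᵥ a₁) + lam2 * (q ⬝ᵥ b₁))
        + del1 * del2 * ((mu1 - del1) * ((x - a₁) ⬝ᵥ (x - a₁)) + mu1 * ((x - a₀) ⬝ᵥ (x - a₀))
          + (mu2 - del2) * ((L *ᵥ x - b₁) ⬝ᵥ (L *ᵥ x - b₁))
          + mu2 * ((L *ᵥ x - b₀) ⬝ᵥ (L *ᵥ x - b₀))) := by
  have sβ := congrArg (· ⬝ᵥ x) hβ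
  have sa := congrArg (· ⬝ᵥ a₁) ha
  have sb := congrArg (· ⬝ᵥ b₁) hb
  subst hu hv
  simp only [splitBregmanEnergy, add_dotProduct, sub_dotProduct, smul_dotProduct, dotProduct_add,
    dotProduct_sub, dotProduct_smul, smul_eq_mul, zero_dotProduct,
    mulVec_transpose, ← dotProduct_mulVec] at sβ sa sb ⊢
  linear_combination (-(2 * del1 * del2)) * (sβ + sa + sb)
    + del1 * del2 * (mu1 * (dotProduct_comm a₁ x - dotProduct_comm a₀ x)
      + mu2 * (dotProduct_comm b₁ (L *ᵥ x) - dotProduct_comm b₀ (L *ᵥ x))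
      + dotProduct_comm u₀ x - dotProduct_comm u₀ a₁
      + dotProduct_comm v₀ (L *ᵥ x) - dotProduct_comm v₀ b₁)

lemma splitBregmanEnergy_succ_add_le (L : Matrix κ ι ℝ) {lam1 lam2 mu1 mu2 del1 del2 : ℝ}
    (hlam1 : 0 ≤ lam1) (hlam2 : 0 ≤ lam2) (hdel1 : 0 ≤ del1) (hdel1' : del1 ≤ mu1)
    (hdel2 : 0 ≤ del2) (hdel2' : del2 ≤ mu2)
    {x a₀ a₁ h p u₀ u₁ : ι → ℝ} {b₀ b₁ q v₀ v₁ : κ → ℝ}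
    (hpa : 0 ≤ p ⬝ᵥ a₁) (hqb : 0 ≤ q ⬝ᵥ b₁)
    (hβ : h + u₀ + Lᵀ *ᵥ v₀ + mu1 • (x - a₀) + mu2 • Lᵀ *ᵥ (L *ᵥ x - b₀) = 0)
    (ha : lam1 • p - u₀ + mu1 • (a₁ - x) = 0)
    (hb : lam2 • q - v₀ + mu2 • (b₁ - L *ᵥ x) = 0)
    (hu : u₁ = u₀ + del1 • (x - a₁))
    (hv : v₁ = v₀ + del2 • (L *ᵥ x - b₁)) :
    2 * del1 * del2 * (h ⬝ᵥ x) + splitBregmanEnergy del1 del2 mu1 mu2 u₁ a₁ v₁ b₁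
      ≤ splitBregmanEnergy del1 del2 mu1 mu2 u₀ a₀ v₀ b₀ := by
  have hE := splitBregmanEnergy_sub_eq L hβ ha hb hu hv
  have hμ₁ : 0 ≤ mu1 := hdel1.trans hdel1'
  have hμ₂ : 0 ≤ mu2 := hdel2.trans hdel2'
  have := dotProduct_self_nonneg (x - a₁)
  have := dotProduct_self_nonneg (x - a₀)
  have := dotProduct_self_nonneg (L *ᵥ x - b₁)
  have := dotProduct_self_nonneg (L *ᵥ x - b₀)
  have hpairs : 0 ≤ 2 * del1 * del2 * (lam1 * (p ⬝ᵥ a₁) + lam2 * (q ⬝ᵥ b₁)) := by positivity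
  have hsquares : 0 ≤ del1 * del2 * ((mu1 - del1) * ((x - a₁) ⬝ᵥ (x - a₁)) + mu1 * ((x - a₀) ⬝ᵥ (x - a₀))
          + (mu2 - del2) * ((L *ᵥ x - b₁) ⬝ᵥ (L *ᵥ x - b₁))
          + mu2 * ((L *ᵥ x - b₀) ⬝ᵥ (L *ᵥ x - b₀))) := by
    have := sub_nonneg.2 hdel1'
    have := sub_nonneg.2 hdel2'
    positivity
  linarith

end Energy

section Subgradient

variable {d : ℕ} {f : (Fin d → ℝ) → ℝ} {x g y g' : Fin d → ℝ}

lemma dotp_eq_dotProduct (x y : Fin d → ℝ) : dotp x y = x ⬝ᵥ y := rfl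

def bregmanDist (f : (Fin d → ℝ) → ℝ) (x g y : Fin d → ℝ) : ℝ := f y - f x - dotp g (y - x)

lemma bregmanDist_nonneg (hg : IsSubgrad f x g) (y : Fin d → ℝ) : 0 ≤ bregmanDist f x g y :=
  sub_nonneg.2 (le_sub_iff_add_le'.2 (hg y))

lemma bregmanDist_le_dotProduct (hg' : IsSubgrad f y g') :
    bregmanDist f x g y ≤ (g' - g) ⬝ᵥ (y - x) := by
  have := hg' x
  rw [dotp_eq_dotProduct, ← neg_sub, dotProduct_neg] at this
  rw [bregmanDist, dotp_eq_dotProduct, sub_dotProduct]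
  linarith

lemma IsSubgrad.dotProduct_sub_nonneg (hg : IsSubgrad f x g) (hg' : IsSubgrad f y g') :
    0 ≤ (g' - g) ⬝ᵥ (y - x) :=
  (bregmanDist_nonneg hg y).trans (bregmanDist_le_dotProduct hg')

end Subgradient

lemma tendsto_zero_of_add_le_of_nonneg {D E : ℕ → ℝ} {c : ℝ} (hc : 0 < c)
    (hD : ∀ k, 0 ≤ D k) (hE : ∀ k, 0 ≤ E k) (hstep : ∀ k, c * D (k + 1) + E (k + 1) ≤ E k) :
    Tendsto D atTop (nhds 0) := by
  have hsum : ∀ n, c * ∑ i ∈ range n, D (i + 1) + E n ≤ E 0 := by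
    intro n
    induction n with
    | zero => simp
    | succ n ih => rw [sum_range_succ]; linarith [hstep n]
  have hD' : Summable fun n ↦ D (n + 1) := by
    refine summable_of_sum_range_le (c := E 0 / c) (fun n ↦ hD (n + 1)) fun n ↦ ?_
    rw [le_div_iff₀' hc]
    linarith [hsum n, hE n]
  exact (tendsto_add_atTop_iff_nat 1).mp hD'.tendsto_atTop_zero

lemma splitBregman_descent_step {p m : ℕ} {V R₁ : (Fin p → ℝ) → ℝ} {R₂ : (Fin m → ℝ) → ℝ}
    (L : Matrix (Fin m) (Fin p) ℝ) {lam1 lam2 mu1 mu2 del1 del2 : ℝ}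
    (hlam1 : 0 ≤ lam1) (hlam2 : 0 ≤ lam2) (hdel1 : 0 ≤ del1) (hdel1' : del1 ≤ mu1)
    (hdel2 : 0 ≤ del2) (hdel2' : del2 ≤ mu2)
    {β a₀ a₁ u₀ u₁ h p₁ : Fin p → ℝ} {b₀ b₁ v₀ v₁ q₁ : Fin m → ℝ}
    {β' h' p' : Fin p → ℝ} {q' : Fin m → ℝ}
    (hh : IsSubgrad V β h) (hp : IsSubgrad R₁ a₁ p₁) (hq : IsSubgrad R₂ b₁ q₁)
    (hp' : IsSubgrad R₁ β' p') (hq' : IsSubgrad R₂ (L *ᵥ β') q')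
    (hopt : h' + lam1 • p' + lam2 • Lᵀ *ᵥ q' = 0)
    (eq1 : 0 = h + u₀ + Lᵀ *ᵥ v₀ + mu1 • (β - a₀) + mu2 • Lᵀ *ᵥ (L *ᵥ β - b₀))
    (eq2 : lam1 • p₁ - u₀ + mu1 • (a₁ - β) = 0)
    (eq3 : lam2 • q₁ - v₀ + mu2 • (b₁ - L *ᵥ β) = 0)
    (eq4 : u₁ = u₀ + del1 • (β - a₁))
    (eq5 : v₁ = v₀ + del2 • (L *ᵥ β - b₁)) :
    2 * del1 * del2 * bregmanDist V β' h' β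
        + splitBregmanEnergy del1 del2 mu1 mu2 (u₁ - lam1 • p') (a₁ - β') (v₁ - lam2 • q')
          (b₁ - L *ᵥ β')
      ≤ splitBregmanEnergy del1 del2 mu1 mu2 (u₀ - lam1 • p') (a₀ - β') (v₀ - lam2 • q')
          (b₀ - L *ᵥ β') := by
  have hE := splitBregmanEnergy_succ_add_le L hlam1 hlam2 hdel1 hdel1' hdel2 hdel2'
    (hp'.dotProduct_sub_nonneg hp) (hq'.dotProduct_sub_nonneg hq) (x := β - β') (h := h - h')
    (u₀ := u₀ - lam1 • p') (u₁ := u₁ - lam1 • p') (a₀ := a₀ - β')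
    (v₀ := v₀ - lam2 • q') (v₁ := v₁ - lam2 • q') (b₀ := b₀ - L *ᵥ β')
    (by simp only [mulVec_sub, mulVec_smul] at eq1 ⊢
        linear_combination (norm := module) -eq1 - hopt)
    (by linear_combination (norm := module) eq2)
    (by rw [mulVec_sub]; linear_combination (norm := module) eq3)
    (by linear_combination (norm := module) eq4)
    (by rw [mulVec_sub]; linear_combination (norm := module) eq5)
  have hD := mul_le_mul_of_nonneg_left (bregmanDist_le_dotProduct (x := β') (g := h') hh)
    (by positivity : 0 ≤ 2 * del1 * del2)
  linarith

theorem splitBregman_bregmanDistance_V_vanishes_general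
    {p m : ℕ}
    (V : (Fin p → ℝ) → ℝ)
    (L : Matrix (Fin m) (Fin p) ℝ)
    (lam1 lam2 mu1 mu2 del1 del2 : ℝ)
    (hlam1 : 0 < lam1) (hlam2 : 0 < lam2)
    (hmu1 : 0 < mu1) (hmu2 : 0 < mu2)
    (hdel1 : 0 < del1) (hdel1' : del1 ≤ mu1)
    (hdel2 : 0 < del2) (hdel2' : del2 ≤ mu2)
    (Beta a u h pp : ℕ → Fin p → ℝ)
    (b v qq : ℕ → Fin m → ℝ)
    (hh : ∀ k : ℕ, IsSubgrad V (Beta (k+1)) (h (k+1)))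
    (hpp : ∀ k : ℕ, IsSubgrad l1 (a (k+1)) (pp (k+1)))
    (hqq : ∀ k : ℕ, IsSubgrad l1 (b (k+1)) (qq (k+1)))
    (iter1 : ∀ k : ℕ, (0 : Fin p → ℝ) =
      h (k+1) + u k + L.transpose.mulVec (v k)
        + mu1 • (Beta (k+1) - a k)
        + mu2 • L.transpose.mulVec (L.mulVec (Beta (k+1)) - b k))
    (iter2 : ∀ k : ℕ, lam1 • pp (k+1) - u k + mu1 • (a (k+1) - Beta (k+1)) = 0)
    (iter3 : ∀ k : ℕ, lam2 • qq (k+1) - v k + mu2 • (b (k+1) - L.mulVec (Beta (k+1))) = 0)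
    (iter4 : ∀ k : ℕ, u (k+1) = u k + del1 • (Beta (k+1) - a (k+1)))
    (iter5 : ∀ k : ℕ, v (k+1) = v k + del2 • (L.mulVec (Beta (k+1)) - b (k+1)))
    (Bstar hstar pstar : Fin p → ℝ) (qstar : Fin m → ℝ)
    (hhs : IsSubgrad V Bstar hstar)
    (hps : IsSubgrad l1 Bstar pstar)
    (hqs : IsSubgrad l1 (L.mulVec Bstar) qstar)
    (hopt : hstar + lam1 • pstar + lam2 • L.transpose.mulVec qstar = 0) :
    Tendsto (fun k : ℕ => V (Beta k) - V Bstar - dotp hstar (Beta k - Bstar))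
      atTop (nhds 0) :=
  tendsto_zero_of_add_le_of_nonneg (D := bregmanDist V Bstar hstar ∘ Beta)
    (E := fun k ↦ splitBregmanEnergy del1 del2 mu1 mu2 (u k - lam1 • pstar) (a k - Bstar)
      (v k - lam2 • qstar) (b k - L *ᵥ Bstar))
    (by positivity) (fun k ↦ bregmanDist_nonneg hhs _)
    (fun k ↦ splitBregmanEnergy_nonneg hdel1.le hdel2.le hmu1.le hmu2.le _ _ _ _)
    fun k ↦ splitBregman_descent_step L hlam1.le hlam2.le hdel1.le hdel1' hdel2.le hdel2'
      (hh k) (hpp k) (hqq k) hps hqs hopt (iter1 k) (iter2 k) (iter3 k) (iter4 k) (iter5 k)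

/-- The Bregman distance of `V` along the split Bregman iterates vanishes. -/
theorem splitBregman_bregmanDistance_V_vanishes
    {p m : ℕ} (hp : 0 < p) (hm : 0 < m)
    (V : (Fin p → ℝ) → ℝ) (hV : ConvexOn ℝ Set.univ V)
    (L : Matrix (Fin m) (Fin p) ℝ)
    (lam1 lam2 mu1 mu2 del1 del2 : ℝ)
    (hlam1 : 0 < lam1) (hlam2 : 0 < lam2)
    (hmu1 : 0 < mu1) (hmu2 : 0 < mu2)
    (hdel1 : 0 < del1) (hdel1' : del1 ≤ mu1)
    (hdel2 : 0 < del2) (hdel2' : del2 ≤ mu2)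
    (Beta a u h pp : ℕ → Fin p → ℝ)
    (b v qq : ℕ → Fin m → ℝ)
    (hh : ∀ k : ℕ, IsSubgrad V (Beta (k+1)) (h (k+1)))
    (hpp : ∀ k : ℕ, IsSubgrad l1 (a (k+1)) (pp (k+1)))
    (hqq : ∀ k : ℕ, IsSubgrad l1 (b (k+1)) (qq (k+1)))
    (iter1 : ∀ k : ℕ, (0 : Fin p → ℝ) =
      h (k+1) + u k + L.transpose.mulVec (v k)
        + mu1 • (Beta (k+1) - a k)
        + mu2 • L.transpose.mulVec (L.mulVec (Beta (k+1)) - b k))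
    (iter2 : ∀ k : ℕ, lam1 • pp (k+1) - u k + mu1 • (a (k+1) - Beta (k+1)) = 0)
    (iter3 : ∀ k : ℕ, lam2 • qq (k+1) - v k + mu2 • (b (k+1) - L.mulVec (Beta (k+1))) = 0)
    (iter4 : ∀ k : ℕ, u (k+1) = u k + del1 • (Beta (k+1) - a (k+1)))
    (iter5 : ∀ k : ℕ, v (k+1) = v k + del2 • (L.mulVec (Beta (k+1)) - b (k+1)))
    (Bstar hstar pstar : Fin p → ℝ) (qstar : Fin m → ℝ)
    (hmin : ∀ x : Fin p → ℝ,
      V Bstar + lam1 * l1 Bstar + lam2 * l1 (L.mulVec Bstar)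
        ≤ V x + lam1 * l1 x + lam2 * l1 (L.mulVec x))
    (hhs : IsSubgrad V Bstar hstar)
    (hps : IsSubgrad l1 Bstar pstar)
    (hqs : IsSubgrad l1 (L.mulVec Bstar) qstar)
    (hopt : hstar + lam1 • pstar + lam2 • L.transpose.mulVec qstar = 0) :
    Tendsto (fun k : ℕ => V (Beta k) - V Bstar - dotp hstar (Beta k - Bstar))
      atTop (nhds 0) :=
  splitBregman_bregmanDistance_V_vanishes_general V L lam1 lam2 mu1 mu2 del1 del2 hlam1 hlam2 hmu1
    hmu2 hdel1 hdel1' hdel2 hdel2' Beta a u h pp b v qq hh hpp hqq iter1 iter2 iter3 iter4 iter5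
    Bstar hstar pstar qstar hhs hps hqs hopt
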